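/- Part (ii) of Proposition 3: under the hypotheses of the previous construction—D > 0, a partition of {1,…,n} into importers I and exporters E, S̄_i ≥ 0, and a solution (X*, S*, T, ν) with S*_i ≥ 0, T_i ≥ 0, satisfying D(S̄_i − S*_i) = X* ν_i for all i, 0 ≤ D(S̄_i − S*_i) ≤ X* (V_i S*_i/(K_i + S*_i)) T_i for i ∈ I (with V_i > 0, K_i > 0), and ν_i ≤ 0 for i ∈ E—for every X with 0 ≤ X ≤ X* there exists a vector S ∈ ℝ^n with S_i ≥ 0 for all i such that D(S̄_i − S_i) = X ν_i for all i and 0 ≤ D(S̄_i − S_i) ≤ X (V_i S_i/(K_i + S_i)) T_i for all i ∈ I. -/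

import Mathlib

/-!
The balance `D (S̄ - S) = X ν` forces `S = S̄ - X ν / D`, which is affine in `X` and equals `S̄ ≥ 0`
at `X = 0` and `S* ≥ 0` at `X = X*`, hence is nonnegative in between. For an importer, both
`0 ≤ X* ν` and `X* ν ≤ X* e(S*) T` have the form `0 ≤ X* a`, which persists when `X*` shrinks to
`X ∈ [0, X*]`. The first also gives `S* ≤ S`, and the Michaelis–Menten efficiency
`e(s) = V s / (K + s)` is monotone, so `e(S*) ≤ e(S)`.
-/

section

variable {R : Type*} [CommRing R] [LinearOrder R] [IsStrictOrderedRing R]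

theorem mul_nonneg_of_le_of_mul_nonneg {x y a : R} (hx : 0 ≤ x) (hxy : x ≤ y)
    (hya : 0 ≤ y * a) : 0 ≤ x * a := by
  rcases hx.eq_or_lt with rfl | hx
  · simp
  · exact mul_nonneg hx.le (nonneg_of_mul_nonneg_right hya (hx.trans_le hxy))

theorem sub_mul_nonneg_of_le {a c x y : R} (ha : 0 ≤ a) (hay : 0 ≤ a - y * c) (hx : 0 ≤ x)
    (hxy : x ≤ y) : 0 ≤ a - x * c := by
  rcases le_total 0 c with hc | hc
  · linarith [mul_le_mul_of_nonneg_right hxy hc]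
  · linarith [mul_nonpos_of_nonneg_of_nonpos hx hc]

end

theorem michaelisMenten_monotoneOn {V K : ℝ} (hV : 0 ≤ V) (hK : 0 < K) :
    MonotoneOn (fun s => V * s / (K + s)) (Set.Ici 0) := by
  intro a (ha : 0 ≤ a) b (hb : 0 ≤ b) hab
  rw [div_le_div_iff₀ (by positivity) (by positivity)]
  nlinarith [mul_nonneg (mul_nonneg hV hK.le) (sub_nonneg.2 hab)]

theorem chemostat_balance_iff {D sbar s x ν : ℝ} (hD : 0 < D) :
    D * (sbar - s) = x * ν ↔ s = sbar - x * (ν / D) := by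
  rw [mul_div_assoc', eq_sub_iff_add_eq, ← eq_sub_iff_add_eq', div_eq_iff hD.ne', mul_comm _ D,
    eq_comm]

theorem chemostat_importer_of_le {D sbar sstar s T ν V K Xstar X : ℝ} (hD : 0 < D)
    (hsstar : 0 ≤ sstar) (hT : 0 ≤ T) (hV : 0 ≤ V) (hK : 0 < K)
    (hbal : D * (sbar - sstar) = Xstar * ν) (hs : D * (sbar - s) = X * ν)
    (himp : 0 ≤ D * (sbar - sstar) ∧
      D * (sbar - sstar) ≤ Xstar * (V * sstar / (K + sstar)) * T)
    (hX : 0 ≤ X) (hXle : X ≤ Xstar) :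
    0 ≤ D * (sbar - s) ∧ D * (sbar - s) ≤ X * (V * s / (K + s)) * T := by
  rw [hbal] at himp
  rw [hs]
  obtain ⟨hlow, hupp⟩ := himp
  set e := V * sstar / (K + sstar)
  have hsstar_le : sstar ≤ s := by
    have hshift : 0 ≤ (Xstar - X) * ν :=
      mul_nonneg_of_le_of_mul_nonneg (sub_nonneg.2 hXle) (by linarith) hlow
    have : 0 ≤ D * (s - sstar) := by linarith
    exact sub_nonneg.1 (nonneg_of_mul_nonneg_right this hD)
  have heff : e ≤ V * s / (K + s) :=
    michaelisMenten_monotoneOn hV hK hsstar (hsstar.trans hsstar_le) hsstar_le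
  refine ⟨mul_nonneg_of_le_of_mul_nonneg hX hXle hlow, ?_⟩
  calc X * ν ≤ X * e * T := by
        have : 0 ≤ X * (e * T - ν) :=
          mul_nonneg_of_le_of_mul_nonneg hX hXle (by rw [mul_sub, ← mul_assoc]; linarith)
        rwa [mul_sub, ← mul_assoc, sub_nonneg] at this
    _ ≤ X * (V * s / (K + s)) * T := by gcongr

theorem chemostat_rba_feasible_below_max_general
    (D : ℝ) (hD : 0 < D) (n : ℕ)
    (I : Set (Fin n))
    (Sbar Sstar T ν V K : Fin n → ℝ) (Xstar : ℝ)
    (hSbar : ∀ i, 0 ≤ Sbar i) (hSstar : ∀ i, 0 ≤ Sstar i)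
    (hT : ∀ i, 0 ≤ T i)
    (hV : ∀ i ∈ I, 0 < V i) (hK : ∀ i ∈ I, 0 < K i)
    (heq : ∀ i, D * (Sbar i - Sstar i) = Xstar * ν i)
    (himp : ∀ i ∈ I, 0 ≤ D * (Sbar i - Sstar i) ∧
      D * (Sbar i - Sstar i) ≤ Xstar * (V i * Sstar i / (K i + Sstar i)) * T i)
    (X : ℝ) (hX0 : 0 ≤ X) (hXle : X ≤ Xstar) :
    ∃ S : Fin n → ℝ, (∀ i, 0 ≤ S i) ∧
      (∀ i, D * (Sbar i - S i) = X * ν i) ∧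
      (∀ i ∈ I, 0 ≤ D * (Sbar i - S i) ∧
        D * (Sbar i - S i) ≤ X * (V i * S i / (K i + S i)) * T i) := by
  have hbal : ∀ i, D * (Sbar i - (Sbar i - X * (ν i / D))) = X * ν i := fun i =>
    (chemostat_balance_iff hD).2 rfl
  refine ⟨fun i => Sbar i - X * (ν i / D), fun i => ?_, hbal, fun i hi => ?_⟩
  · have hSstar_eq := (chemostat_balance_iff hD).1 (heq i)
    exact sub_mul_nonneg_of_le (hSbar i) (hSstar_eq ▸ hSstar i) hX0 hXle
  · exact chemostat_importer_of_le hD (hSstar i) (hT i) (hV i hi).le (hK i hi) (heq i)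
      (hbal i) (himp i hi) hX0 hXle

/-- Part (ii) of Proposition 3: if the chemostat coupling constraints are
feasible at population X*, then for every 0 ≤ X ≤ X* there exist nonnegative
medium concentrations S satisfying them at population X (with the same
transporter concentrations T and exchange fluxes ν). -/
theorem chemostat_rba_feasible_below_max
    (D : ℝ) (hD : 0 < D) (n : ℕ) (hn : 1 ≤ n)
    (I E : Set (Fin n)) (hunion : I ∪ E = Set.univ) (hdisj : I ∩ E = ∅)
    (Sbar Sstar T ν V K : Fin n → ℝ) (Xstar : ℝ) (hXstar : 0 ≤ Xstar)
    (hSbar : ∀ i, 0 ≤ Sbar i) (hSstar : ∀ i, 0 ≤ Sstar i)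
    (hT : ∀ i, 0 ≤ T i)
    (hV : ∀ i ∈ I, 0 < V i) (hK : ∀ i ∈ I, 0 < K i)
    (heq : ∀ i, D * (Sbar i - Sstar i) = Xstar * ν i)
    (himp : ∀ i ∈ I, 0 ≤ D * (Sbar i - Sstar i) ∧
      D * (Sbar i - Sstar i) ≤ Xstar * (V i * Sstar i / (K i + Sstar i)) * T i)
    (hexp : ∀ i ∈ E, ν i ≤ 0)
    (X : ℝ) (hX0 : 0 ≤ X) (hXle : X ≤ Xstar) :
    ∃ S : Fin n → ℝ, (∀ i, 0 ≤ S i) ∧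
      (∀ i, D * (Sbar i - S i) = X * ν i) ∧
      (∀ i ∈ I, 0 ≤ D * (Sbar i - S i) ∧
        D * (Sbar i - S i) ≤ X * (V i * S i / (K i + S i)) * T i) :=
  chemostat_rba_feasible_below_max_general D hD n I Sbar Sstar T ν V K Xstar hSbar hSstar hT hV hK
    heq himp X hX0 hXle
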